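/- arXiv:1805.10563 — 2 statements merged into one kernel-verified Lean document; each statement's English description precedes it below -/
import Mathlib

section
/- Let Λ be a finite-dimensional algebra over an algebraically closed field k, and let (T, F) be a torsion pair in mod Λ. Then (T, F) is splitting (every indecomposable module lies in T or in F) if and only if for every module N in F, the Auslander–Reiten translate τN also lies in F. -/
open CategoryTheory CategoryTheory.Limits

universe u

section Prelude
variable {A : Type u} [Ring A]

/-- finite direct sum of `d` copies of `T` -/
noncomputable def copies (A : Type u) [Ring A] (T : ModuleCat.{u} A) (d : ℕ) :
    ModuleCat.{u} A := ModuleCat.of A (Fin d → T)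

/-- `M` is generated by `T`. -/
def IsGenBy (T M : ModuleCat.{u} A) : Prop :=
  ∃ (d : ℕ) (f : copies A T d ⟶ M), Function.Surjective f

/-- `M` is cogenerated by `T`. -/
def IsCogenBy (T M : ModuleCat.{u} A) : Prop :=
  ∃ (d : ℕ) (f : M ⟶ copies A T d), Function.Injective f

/-- `M` lies in `add T`: it is a direct summand of a finite direct sum of copies of `T`. -/
def InAdd (T M : ModuleCat.{u} A) : Prop :=
  ∃ (d : ℕ) (i : M ⟶ copies A T d) (p : copies A T d ⟶ M), i ≫ p = 𝟙 M

/-- `N` is a direct summand of `D`. -/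
def IsSummand (N D : ModuleCat.{u} A) : Prop :=
  ∃ (i : N ⟶ D) (p : D ⟶ N), i ≫ p = 𝟙 N

/-- Indecomposable module: nonzero and no nontrivial idempotent endomorphism. -/
def Indec (M : ModuleCat.{u} A) : Prop :=
  ¬ IsZero M ∧ ∀ e : M ⟶ M, e ≫ e = e → e = 0 ∨ e = 𝟙 M

/-- `0 → L → E → M → 0` is a short exact sequence. -/
def IsSES {L E M : ModuleCat.{u} A} (f : L ⟶ E) (g : E ⟶ M) : Prop :=
  Function.Injective f ∧ Function.Surjective g ∧ Function.Exact f g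

/-- projective dimension at most `n`. -/
def ProjDimLE : ℕ → ModuleCat.{u} A → Prop
  | 0, M => Projective M
  | n+1, M => Projective M ∨ ∃ (K P : ModuleCat.{u} A) (f : K ⟶ P) (g : P ⟶ M),
      Projective P ∧ Module.Finite A K ∧ IsSES f g ∧ ProjDimLE n K

/-- injective dimension at most `n`. -/
def InjDimLE : ℕ → ModuleCat.{u} A → Prop
  | 0, M => Injective M
  | n+1, M => Injective M ∨ ∃ (I C : ModuleCat.{u} A) (f : M ⟶ I) (g : I ⟶ C),
      Injective I ∧ Module.Finite A C ∧ IsSES f g ∧ InjDimLE n C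

/-- global dimension at most `n` (tested on finitely generated modules). -/
def GlobalDimLE (A : Type u) [Ring A] (n : ℕ) : Prop :=
  ∀ M : ModuleCat.{u} A, Module.Finite A M → ProjDimLE n M

/-- global dimension equal to `2`. -/
def GlobalDimEq2 (A : Type u) [Ring A] : Prop :=
  GlobalDimLE A 2 ∧ ¬ GlobalDimLE A 1

/-- dominant dimension at least 2 : there is an exact sequence `0 → A → I₀ → I₁`
with `I₀, I₁` projective-injective. -/
def DomDimGE2 (A : Type u) [Ring A] : Prop :=
  ∃ (I₀ I₁ : ModuleCat.{u} A) (f : ModuleCat.of A A ⟶ I₀) (g : I₀ ⟶ I₁),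
    Injective I₀ ∧ Projective I₀ ∧ Injective I₁ ∧ Projective I₁ ∧
    Function.Injective f ∧ Function.Exact f g

/-- `Ext¹(X, Y) = 0`, expressed by the splitting of all short exact sequences
`0 → Y → E → X → 0`. -/
def Ext1Vanish (X Y : ModuleCat.{u} A) : Prop :=
  ∀ (E : ModuleCat.{u} A) (f : Y ⟶ E) (g : E ⟶ X),
    IsSES f g → ∃ s : X ⟶ E, s ≫ g = 𝟙 X

/-- `T` is a tilting module. -/
structure IsTilting (T : ModuleCat.{u} A) : Prop where
  fg : Module.Finite A T
  pd : ProjDimLE 1 T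
  rigid : Ext1Vanish T T
  cores : ∃ (T₀ T₁ : ModuleCat.{u} A) (f : ModuleCat.of A A ⟶ T₀) (g : T₀ ⟶ T₁),
    IsSES f g ∧ InAdd T T₀ ∧ InAdd T T₁

/-- `T` is a cotilting module. -/
structure IsCotilting (T : ModuleCat.{u} A) : Prop where
  fg : Module.Finite A T
  id : InjDimLE 1 T
  rigid : Ext1Vanish T T
  res : ∀ I : ModuleCat.{u} A, Module.Finite A I → Injective I →
    ∃ (T₁ T₀ : ModuleCat.{u} A) (f : T₁ ⟶ T₀) (g : T₀ ⟶ I),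
      IsSES f g ∧ InAdd T T₀ ∧ InAdd T T₁

/-- `0 → L → E → M → 0` is an almost split (Auslander–Reiten) sequence. -/
structure IsAlmostSplit {L E M : ModuleCat.{u} A} (f : L ⟶ E) (g : E ⟶ M) : Prop where
  ses : IsSES f g
  not_split : ¬ ∃ s : M ⟶ E, s ≫ g = 𝟙 M
  indec_left : Indec L
  indec_right : Indec M
  right_almost : ∀ (X : ModuleCat.{u} A) (h : X ⟶ M),
    (¬ ∃ s : M ⟶ X, s ≫ h = 𝟙 M) → ∃ t : X ⟶ E, t ≫ g = h
  left_almost : ∀ (X : ModuleCat.{u} A) (h : L ⟶ X),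
    (¬ ∃ r : X ⟶ L, h ≫ r = 𝟙 L) → ∃ t : E ⟶ X, f ≫ t = h

/-- The Auslander–Reiten translation `τ` (and its inverse `τ⁻¹`),
characterized by almost split sequences. -/
structure ARTranslation (A : Type u) [Ring A] where
  τ : ModuleCat.{u} A → ModuleCat.{u} A
  τinv : ModuleCat.{u} A → ModuleCat.{u} A
  fg_τ : ∀ M : ModuleCat.{u} A, Module.Finite A M → Module.Finite A (τ M)
  fg_τinv : ∀ M : ModuleCat.{u} A, Module.Finite A M → Module.Finite A (τinv M)
  τ_proj : ∀ M : ModuleCat.{u} A, Module.Finite A M → Projective M → IsZero (τ M)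
  τinv_inj : ∀ M : ModuleCat.{u} A, Module.Finite A M → Injective M → IsZero (τinv M)
  τ_spec : ∀ M : ModuleCat.{u} A, Module.Finite A M → Indec M → ¬ Projective M →
    ∃ (E : ModuleCat.{u} A) (f : τ M ⟶ E) (g : E ⟶ M), IsAlmostSplit f g
  τinv_spec : ∀ M : ModuleCat.{u} A, Module.Finite A M → Indec M → ¬ Injective M →
    ∃ (E : ModuleCat.{u} A) (f : M ⟶ E) (g : E ⟶ τinv M), IsAlmostSplit f g
  τ_iso : ∀ M N : ModuleCat.{u} A, Nonempty (M ≅ N) → Nonempty (τ M ≅ τ N)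
  τinv_iso : ∀ M N : ModuleCat.{u} A, Nonempty (M ≅ N) → Nonempty (τinv M ≅ τinv N)
  τ_add : ∀ M N : ModuleCat.{u} A, Nonempty (τ (M ⊞ N) ≅ τ M ⊞ τ N)
  τinv_add : ∀ M N : ModuleCat.{u} A, Nonempty (τinv (M ⊞ N) ≅ τinv M ⊞ τinv N)

/-- A torsion pair `(T, F)` in `mod A`. -/
structure TorsionPair (A : Type u) [Ring A] where
  tors : Set (ModuleCat.{u} A)
  free : Set (ModuleCat.{u} A)
  fg_tors : ∀ M ∈ tors, Module.Finite A M
  fg_free : ∀ N ∈ free, Module.Finite A N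
  hom_zero : ∀ M ∈ tors, ∀ N ∈ free, ∀ f : M ⟶ N, f = 0
  max_tors : ∀ M : ModuleCat.{u} A, Module.Finite A M →
    (∀ N ∈ free, ∀ f : M ⟶ N, f = 0) → M ∈ tors
  max_free : ∀ N : ModuleCat.{u} A, Module.Finite A N →
    (∀ M ∈ tors, ∀ f : M ⟶ N, f = 0) → N ∈ free

/-- A torsion pair is splitting if every f.g. indecomposable lies in one of the classes. -/
def TorsionPair.Splitting (P : TorsionPair A) : Prop :=
  ∀ M : ModuleCat.{u} A, Module.Finite A M → Indec M → M ∈ P.tors ∨ M ∈ P.free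

/-- Membership in `C_Λ = Gen(Q̃) ∩ Cogen(Q̃)`, `Q̃` the sum of the indecomposable
projective-injective modules: generated and cogenerated by a projective-injective module. -/
def InC (M : ModuleCat.{u} A) : Prop :=
  (∃ Q : ModuleCat.{u} A, Module.Finite A Q ∧ Projective Q ∧ Injective Q ∧ IsGenBy Q M) ∧
  (∃ Q : ModuleCat.{u} A, Module.Finite A Q ∧ Projective Q ∧ Injective Q ∧ IsCogenBy Q M)

/-- `K` is a syzygy of `M`: kernel of an epimorphism from a f.g. projective onto `M`. -/
def IsSyzygy (K M : ModuleCat.{u} A) : Prop :=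
  ∃ (P : ModuleCat.{u} A) (f : K ⟶ P) (g : P ⟶ M),
    Projective P ∧ Module.Finite A P ∧ IsSES f g

/-- `g : P ⟶ M` is a projective cover. -/
def IsProjCover {P M : ModuleCat.{u} A} (g : P ⟶ M) : Prop :=
  Projective P ∧ Module.Finite A P ∧ Function.Surjective g ∧
    ∀ (X : ModuleCat.{u} A) (h : X ⟶ P), Function.Surjective (h ≫ g) → Function.Surjective h

/-- `K` is the minimal syzygy `Ω M`: kernel of a projective cover of `M`. -/
def IsMinSyzygy (K M : ModuleCat.{u} A) : Prop :=
  ∃ (P : ModuleCat.{u} A) (f : K ⟶ P) (g : P ⟶ M), IsSES f g ∧ IsProjCover g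

/-- `C` is a cosyzygy of `M`: cokernel of a monomorphism from `M` into a f.g. injective. -/
def IsCosyzygy (C M : ModuleCat.{u} A) : Prop :=
  ∃ (I : ModuleCat.{u} A) (f : M ⟶ I) (g : I ⟶ C),
    Injective I ∧ Module.Finite A I ∧ IsSES f g

/-- `M` is basic: no indecomposable occurs twice in a decomposition. -/
def IsBasic (M : ModuleCat.{u} A) : Prop :=
  ∀ X : ModuleCat.{u} A, Indec X → ¬ IsSummand (X ⊞ X) M

/-- `D` is a basic f.g. injective cogenerator (i.e. `D ≅ DA`). -/
def IsMinimalInjectiveCogenerator (D : ModuleCat.{u} A) : Prop :=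
  Module.Finite A D ∧ Injective D ∧ IsBasic D ∧
    ∀ M : ModuleCat.{u} A, Module.Finite A M → IsCogenBy D M

end Prelude

/-- a tilted algebra: the endomorphism algebra of a tilting module over a
finite-dimensional hereditary algebra. -/
structure TiltedWitness (k : Type u) [Field k] (A : Type u) [Ring A] [Algebra k A] where
  H : Type u
  [ringH : Ring H]
  [algH : Algebra k H]
  findim : FiniteDimensional k H
  hered : ∀ M : ModuleCat.{u} H, Module.Finite H M → ProjDimLE 1 M
  T : Type u
  [acg : AddCommGroup T]
  [modH : Module H T]
  [modk : Module k T]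
  [tower : IsScalarTower k H T]
  [scc : SMulCommClass H k T]
  tilt : IsTilting (ModuleCat.of H T)
  iso : Nonempty (A ≃ₐ[k] (T →ₗ[H] T))

def IsTiltedAlg (k : Type u) [Field k] (A : Type u) [Ring A] [Algebra k A] : Prop :=
  Nonempty (TiltedWitness k A)

/-!
Both conditions are equivalent to `Ext¹(F, T) = 0` for all torsion-free `F` and torsion `T`.
If these groups vanish, the canonical sequence `0 → tM → M → M/tM → 0` splits, so an
indecomposable `M` is torsion or torsion-free; conversely, if every module is a sum of a torsion
and a torsion-free module, every extension of a torsion-free module by a torsion one splits.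
For an indecomposable non-projective `N ∈ F` the almost split sequence `0 → τN → E → N → 0` does
not split, so the indecomposable `τN` cannot be torsion. Conversely, if `τN ∈ F` then no torsion
`T` maps to `τN`, and every extension of `N` by `T` factors through the almost split sequence and
therefore splits. Since `Λ` is Artinian, every finitely generated module has finite length, and
additivity of `τ` and of `Ext¹` reduces everything to indecomposable modules.
-/

section ShortExact

variable {A : Type u} [Ring A] {L E M : ModuleCat.{u} A} {f : L ⟶ E} {g : E ⟶ M}

lemma IsSES.comp_eq_zero (h : IsSES f g) : f ≫ g = 0 :=
  ModuleCat.hom_ext (LinearMap.ext h.2.2.apply_apply_eq_zero)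

lemma IsSES.exact (h : IsSES f g) : (ShortComplex.mk f g h.comp_eq_zero).Exact :=
  (ShortComplex.ShortExact.moduleCat_exact_iff_function_exact _).mpr h.2.2

lemma IsSES.epi (h : IsSES f g) : Epi g := (ModuleCat.epi_iff_surjective g).mpr h.2.1

lemma IsSES.exists_lift (h : IsSES f g) {X : ModuleCat.{u} A} (k : X ⟶ E) (hk : k ≫ g = 0) :
    ∃ l : X ⟶ L, l ≫ f = k :=
  have : Mono f := (ModuleCat.mono_iff_injective f).mpr h.1
  ⟨h.exact.lift k hk, h.exact.lift_f k hk⟩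

lemma IsSES.exists_desc (h : IsSES f g) {Y : ModuleCat.{u} A} (k : E ⟶ Y) (hk : f ≫ k = 0) :
    ∃ d : M ⟶ Y, g ≫ d = k :=
  have := h.epi
  ⟨h.exact.desc k hk, h.exact.g_desc k hk⟩

lemma IsSES.finite_middle (h : IsSES f g) [Module.Finite A L] [Module.Finite A M] :
    Module.Finite A E := by
  rw [Module.finite_def]
  apply Submodule.fg_of_fg_map_of_fg_inf_ker g.hom
  · rw [Submodule.map_top, LinearMap.range_eq_top.mpr h.2.1]
    exact Module.finite_def.mp ‹_›
  · rw [top_inf_eq, LinearMap.exact_iff.mp h.2.2, LinearMap.range_eq_map]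
    exact (Module.finite_def.mp ‹_›).map _

lemma IsSES.exists_section_of_iso_biprod (h : IsSES f g) {X Y : ModuleCat.{u} A}
    (φ : E ≅ X ⊞ Y) (hLY : ∀ k : L ⟶ Y, k = 0) (hXM : ∀ k : X ⟶ M, k = 0) :
    ∃ s : M ⟶ E, s ≫ g = 𝟙 M := by
  have := h.epi
  have hX : biprod.inl ≫ φ.inv ≫ g = 0 := hXM _
  obtain ⟨d, hd⟩ := h.exists_desc (φ.hom ≫ biprod.snd) (by rw [hLY (f ≫ _)])
  refine ⟨d ≫ biprod.inr ≫ φ.inv, (cancel_epi g).mp ?_⟩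
  calc g ≫ d ≫ biprod.inr ≫ φ.inv ≫ g
      = φ.hom ≫ (biprod.fst ≫ biprod.inl ≫ φ.inv ≫ g + biprod.snd ≫ biprod.inr ≫ φ.inv ≫ g) := by
        rw [reassoc_of% hd, hX, comp_zero, zero_add]
    _ = φ.hom ≫ (biprod.fst ≫ biprod.inl + biprod.snd ≫ biprod.inr) ≫ φ.inv ≫ g := by
        simp only [Preadditive.add_comp, Category.assoc]
    _ = g ≫ 𝟙 M := by rw [biprod.total]; simp

end ShortExact

section RelProjective

variable {A : Type u} [Ring A] {T : ModuleCat.{u} A}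

/-- Equivalent to `Ext1Vanish X T` (by pulling extensions back along `h`), but visibly additive
in `X`. -/
def RelProjective (X T : ModuleCat.{u} A) : Prop :=
  ∀ ⦃E M : ModuleCat.{u} A⦄ (f : T ⟶ E) (g : E ⟶ M), IsSES f g →
    ∀ h : X ⟶ M, ∃ l : X ⟶ E, l ≫ g = h

lemma RelProjective.ext1Vanish {X : ModuleCat.{u} A} (hX : RelProjective X T) :
    Ext1Vanish X T :=
  fun _ f g hfg => hX f g hfg (𝟙 X)

lemma Ext1Vanish.relProjective {X : ModuleCat.{u} A} (hX : Ext1Vanish X T) :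
    RelProjective X T := by
  intro E M f g hfg h
  let P : Submodule A (E × X) :=
    LinearMap.ker (g.hom ∘ₗ LinearMap.fst A E X - h.hom ∘ₗ LinearMap.snd A E X)
  have hmem : ∀ t : T, (f t, (0 : X)) ∈ P := fun t => by
    simp [P, hfg.2.2.apply_apply_eq_zero]
  let f' : T ⟶ ModuleCat.of A P :=
    ModuleCat.ofHom (LinearMap.codRestrict P (LinearMap.inl A E X ∘ₗ f.hom) hmem)
  let g' : ModuleCat.of A P ⟶ X := ModuleCat.ofHom (LinearMap.snd A E X ∘ₗ P.subtype)
  have hP : ∀ z : P, g z.1.1 = h z.1.2 := fun z => sub_eq_zero.mp z.2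
  have hses : IsSES f' g' := by
    refine ⟨fun t t' htt' => hfg.1 congr(($htt').1.1), fun x => ?_, fun z => ⟨fun hz => ?_, ?_⟩⟩
    · obtain ⟨e, he⟩ := hfg.2.1 (h x)
      exact ⟨⟨(e, x), sub_eq_zero.mpr he⟩, rfl⟩
    · have hz : z.1.2 = 0 := hz
      obtain ⟨t, ht⟩ := (hfg.2.2 z.1.1).mp (by rw [hP z, hz, map_zero])
      exact ⟨t, Subtype.ext (Prod.ext ht hz.symm)⟩
    · rintro ⟨t, rfl⟩
      rfl
  obtain ⟨s, hs⟩ := hX _ f' g' hses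
  refine ⟨s ≫ ModuleCat.ofHom (LinearMap.fst A E X ∘ₗ P.subtype), ?_⟩
  ext x
  exact (hP (s x)).trans (congrArg h congr(($hs) x))

lemma RelProjective.of_iso {M N : ModuleCat.{u} A} (hN : RelProjective N T) (e : M ≅ N) :
    RelProjective M T := fun _ _ f g hfg h =>
  let ⟨l, hl⟩ := hN f g hfg (e.inv ≫ h)
  ⟨e.hom ≫ l, by rw [Category.assoc, hl, e.hom_inv_id_assoc]⟩

lemma RelProjective.of_isZero {M : ModuleCat.{u} A} (hM : IsZero M) : RelProjective M T :=
  fun _ _ _ _ _ _ => ⟨0, hM.eq_of_src _ _⟩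

lemma RelProjective.of_projective {M : ModuleCat.{u} A} [Projective M] : RelProjective M T :=
  fun _ _ _ g hfg h =>
  have := hfg.epi
  ⟨Projective.factorThru h g, Projective.factorThru_comp h g⟩

lemma RelProjective.biprod {M N : ModuleCat.{u} A} (hM : RelProjective M T)
    (hN : RelProjective N T) : RelProjective (M ⊞ N) T := fun _ _ f g hfg h =>
  let ⟨l₁, hl₁⟩ := hM f g hfg (biprod.inl ≫ h)
  let ⟨l₂, hl₂⟩ := hN f g hfg (biprod.inr ≫ h)
  ⟨biprod.desc l₁ l₂, biprod.hom_ext' _ _ (by simpa using hl₁) (by simpa using hl₂)⟩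

lemma IsAlmostSplit.ext1Vanish {L E M : ModuleCat.{u} A} {f₀ : L ⟶ E} {g₀ : E ⟶ M}
    (har : IsAlmostSplit f₀ g₀) (hT : ∀ k : T ⟶ L, k = 0) : Ext1Vanish M T := by
  intro E' f g hfg
  by_contra hsplit
  have := hfg.epi
  -- `g` factors through `g₀`; the factor `t` kills `T`, hence descends to a section of `g₀`.
  obtain ⟨t, ht⟩ := har.right_almost E' g hsplit
  obtain ⟨u, hu⟩ := har.ses.exists_lift (f ≫ t) (by rw [Category.assoc, ht, hfg.comp_eq_zero])
  obtain ⟨σ, hσ⟩ := hfg.exists_desc t (by rw [← hu, hT u, zero_comp])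
  exact har.not_split ⟨σ, (cancel_epi g).mp (by rw [reassoc_of% hσ, ht, Category.comp_id])⟩

end RelProjective

section Decomposition

noncomputable def biprod.interchange {C : Type*} [Category C] [HasZeroMorphisms C]
    [HasBinaryBiproducts C] (W X Y Z : C) : (W ⊞ X) ⊞ (Y ⊞ Z) ≅ (W ⊞ Y) ⊞ (X ⊞ Z) :=
  biprod.associator W X (Y ⊞ Z) ≪≫
    biprod.mapIso (Iso.refl W) ((biprod.associator X Y Z).symm ≪≫
      biprod.mapIso (biprod.braiding X Y) (Iso.refl Z) ≪≫ biprod.associator Y X Z) ≪≫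
    (biprod.associator W Y (X ⊞ Z)).symm

variable {A : Type u} [Ring A] [IsArtinianRing A]

/-- Induction on the length of a finitely generated module, splitting off the image and the
kernel of a nontrivial idempotent. -/
theorem ModuleCat.induction_on_indec (Q : ModuleCat.{u} A → Prop)
    (of_iso : ∀ {M N : ModuleCat.{u} A}, (M ≅ N) → Q N → Q M)
    (of_isZero : ∀ M : ModuleCat.{u} A, IsZero M → Q M)
    (of_indec : ∀ M : ModuleCat.{u} A, Module.Finite A M → Indec M → Q M)
    (of_biprod : ∀ M N : ModuleCat.{u} A, Module.Finite A M → Module.Finite A N →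
      Q M → Q N → Q (M ⊞ N))
    (M : ModuleCat.{u} A) [Module.Finite A M] : Q M := by
  induction hn : Module.length A M using WellFoundedLT.induction generalizing M with
  | _ n ih =>
  subst hn
  by_cases hzero : IsZero M
  · exact of_isZero M hzero
  by_cases hindec : Indec M
  · exact of_indec M inferInstance hindec
  obtain ⟨e, he, he0, he1⟩ : ∃ e : M ⟶ M, e ≫ e = e ∧ e ≠ 0 ∧ e ≠ 𝟙 M := by
    simpa [Indec, hzero] using hindec
  have hidem : IsIdempotentElem e.hom := congrArg ModuleCat.Hom.hom he
  have : IsArtinian A M := ((IsArtinianRing.tfae A M).out 0 2).mp ‹_›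
  have hrange : LinearMap.range e.hom ≠ ⊤ := by
    refine fun htop => he1 (ModuleCat.hom_ext (LinearMap.ext fun x => ?_))
    obtain ⟨y, rfl⟩ := LinearMap.range_eq_top.mp htop x
    exact LinearMap.congr_fun hidem y
  have hker : LinearMap.ker e.hom ≠ ⊤ := fun htop =>
    he0 (ModuleCat.hom_ext (LinearMap.ker_eq_top.mp htop))
  exact of_iso
    ((Submodule.prodEquivOfIsCompl _ _ (LinearMap.IsIdempotentElem.isCompl hidem)).symm.toModuleIso
      ≪≫ (ModuleCat.biprodIsoProd (.of A _) (.of A _)).symm)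
    (of_biprod _ _ inferInstance inferInstance (ih _ (Submodule.length_lt hrange) _ rfl)
      (ih _ (Submodule.length_lt hker) _ rfl))

end Decomposition

namespace TorsionPair

section Closure

variable {A : Type u} [Ring A] (P : TorsionPair A)

lemma mem_tors_of_surjective {X Q : ModuleCat.{u} A} (hX : X ∈ P.tors) (p : X ⟶ Q)
    (hp : Function.Surjective p) : Q ∈ P.tors := by
  have := P.fg_tors X hX
  have : Epi p := (ModuleCat.epi_iff_surjective p).mpr hp
  exact P.max_tors Q (Module.Finite.of_surjective p.hom hp) fun Y hY k =>
    (cancel_epi p).mp (by rw [P.hom_zero X hX Y hY (p ≫ k), comp_zero])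

lemma mem_free_of_mono {M Y : ModuleCat.{u} A} (hY : Y ∈ P.free) (i : M ⟶ Y) [Mono i]
    (hM : Module.Finite A M) : M ∈ P.free :=
  P.max_free M hM fun X hX k => (cancel_mono i).mp (by rw [P.hom_zero X hX Y hY (k ≫ i), zero_comp])

lemma mem_tors_of_iso {M N : ModuleCat.{u} A} (hM : M ∈ P.tors) (e : M ≅ N) : N ∈ P.tors :=
  P.mem_tors_of_surjective hM e.hom e.toLinearEquiv.surjective

lemma mem_free_of_iso {M N : ModuleCat.{u} A} (hN : N ∈ P.free) (e : M ≅ N) : M ∈ P.free :=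
  have := P.fg_free N hN
  P.mem_free_of_mono hN e.hom (Module.Finite.equiv e.symm.toLinearEquiv)

lemma mem_tors_of_isZero {M : ModuleCat.{u} A} (hM : IsZero M) : M ∈ P.tors :=
  have := ModuleCat.isZero_iff_subsingleton.mp hM
  P.max_tors M inferInstance fun _ _ _ => hM.eq_of_src _ _

lemma mem_free_of_isZero {M : ModuleCat.{u} A} (hM : IsZero M) : M ∈ P.free :=
  have := ModuleCat.isZero_iff_subsingleton.mp hM
  P.max_free M inferInstance fun _ _ _ => hM.eq_of_tgt _ _

lemma biprod_mem_tors {M N : ModuleCat.{u} A} (hM : M ∈ P.tors) (hN : N ∈ P.tors) :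
    (M ⊞ N) ∈ P.tors := by
  have := P.fg_tors M hM
  have := P.fg_tors N hN
  refine P.max_tors _ (Module.Finite.equiv (ModuleCat.biprodIsoProd M N).symm.toLinearEquiv)
    fun Y hY k => biprod.hom_ext' _ _ ?_ ?_
  · rw [P.hom_zero M hM Y hY (biprod.inl ≫ k), comp_zero]
  · rw [P.hom_zero N hN Y hY (biprod.inr ≫ k), comp_zero]

lemma biprod_mem_free_iff {M N : ModuleCat.{u} A} :
    (M ⊞ N) ∈ P.free ↔ M ∈ P.free ∧ N ∈ P.free := by
  refine ⟨fun h => ?_, fun ⟨hM, hN⟩ => ?_⟩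
  · have := P.fg_free _ h
    exact ⟨P.mem_free_of_mono h biprod.inl (Module.Finite.of_surjective
        (biprod.fst : M ⊞ N ⟶ M).hom ((ModuleCat.epi_iff_surjective _).mp inferInstance)),
      P.mem_free_of_mono h biprod.inr (Module.Finite.of_surjective
        (biprod.snd : M ⊞ N ⟶ N).hom ((ModuleCat.epi_iff_surjective _).mp inferInstance))⟩
  · have := P.fg_free M hM
    have := P.fg_free N hN
    refine P.max_free _ (Module.Finite.equiv (ModuleCat.biprodIsoProd M N).symm.toLinearEquiv)
      fun X hX k => biprod.hom_ext _ _ ?_ ?_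
    · rw [P.hom_zero X hX M hM (k ≫ biprod.fst), zero_comp]
    · rw [P.hom_zero X hX N hN (k ≫ biprod.snd), zero_comp]

/-- Closure of the torsion class under extensions. -/
lemma mem_tors_of_ker_of_range {E F : ModuleCat.{u} A} [Module.Finite A E] (φ : E ⟶ F)
    (hker : ModuleCat.of A (LinearMap.ker φ.hom) ∈ P.tors)
    (hrange : ModuleCat.of A (LinearMap.range φ.hom) ∈ P.tors) : E ∈ P.tors := by
  refine P.max_tors E inferInstance fun Y hY ψ => ?_
  have hψ : LinearMap.ker φ.hom ≤ LinearMap.ker ψ.hom := fun x hx =>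
    congr(($(P.hom_zero _ hker Y hY (ModuleCat.ofHom (LinearMap.ker φ.hom).subtype ≫ ψ))) ⟨x, hx⟩)
  have hzero := P.hom_zero _ hrange Y hY
    (ModuleCat.ofHom ((LinearMap.ker φ.hom).liftQ ψ.hom hψ ∘ₗ φ.hom.quotKerEquivRange.symm))
  ext x
  simpa [LinearMap.quotKerEquivRange_symm_apply_image] using
    congr(($hzero) ⟨φ x, LinearMap.mem_range_self φ.hom x⟩)

end Closure

section TorsionSubmodule

variable {A : Type u} [Ring A] [IsNoetherianRing A] (P : TorsionPair A)

lemma sup_mem_tors {M : ModuleCat.{u} A} [Module.Finite A M] {N₁ N₂ : Submodule A M}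
    (h₁ : ModuleCat.of A N₁ ∈ P.tors) (h₂ : ModuleCat.of A N₂ ∈ P.tors) :
    ModuleCat.of A ↥(N₁ ⊔ N₂) ∈ P.tors := by
  refine P.max_tors _ inferInstance fun Y hY ψ => ?_
  have hψ : ∀ {N : Submodule A M} (hN : N ≤ N₁ ⊔ N₂), ModuleCat.of A N ∈ P.tors →
      ∀ x : N, ψ ⟨x, hN x.2⟩ = 0 := fun hN hNt x =>
    congr(($(P.hom_zero _ hNt Y hY (ModuleCat.ofHom (Submodule.inclusion hN) ≫ ψ))) x)
  ext ⟨z, hz⟩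
  obtain ⟨y₁, hy₁, y₂, hy₂, rfl⟩ := Submodule.mem_sup.mp hz
  have hsum : (⟨y₁ + y₂, hz⟩ : ↥(N₁ ⊔ N₂)) =
      ⟨y₁, le_sup_left (a := N₁) hy₁⟩ + ⟨y₂, le_sup_right (a := N₁) hy₂⟩ := rfl
  rw [hsum, map_add, hψ le_sup_left h₁ ⟨y₁, hy₁⟩, hψ le_sup_right h₂ ⟨y₂, hy₂⟩, add_zero]
  rfl

lemma exists_greatest_tors_submodule (M : ModuleCat.{u} A) [Module.Finite A M] :
    ∃ t : Submodule A M, ModuleCat.of A t ∈ P.tors ∧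
      ∀ N : Submodule A M, ModuleCat.of A N ∈ P.tors → N ≤ t := by
  obtain ⟨t, ht, hmax⟩ := set_has_maximal_iff_noetherian.mpr inferInstance
    {N : Submodule A M | ModuleCat.of A N ∈ P.tors}
    ⟨⊥, P.mem_tors_of_isZero (ModuleCat.isZero_of_subsingleton _)⟩
  exact ⟨t, ht, fun N hN =>
    le_sup_right.trans (eq_of_le_of_not_lt le_sup_left (hmax _ (P.sup_mem_tors ht hN))).ge⟩

lemma quotient_mem_free {M : ModuleCat.{u} A} [Module.Finite A M] {t : Submodule A M}
    (ht : ModuleCat.of A t ∈ P.tors)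
    (hmax : ∀ N : Submodule A M, ModuleCat.of A N ∈ P.tors → N ≤ t) :
    ModuleCat.of A (M ⧸ t) ∈ P.free := by
  refine P.max_free _ inferInstance fun X hX h => ?_
  -- The preimage `N` of the image of `h` is an extension of that image by `t`.
  let N := (LinearMap.range h.hom).comap t.mkQ
  have htN : t ≤ N := fun x hx => by
    simp [N, (Submodule.Quotient.mk_eq_zero t).mpr hx]
  have hN : ModuleCat.of A N ∈ P.tors := by
    refine P.mem_tors_of_ker_of_range (ModuleCat.ofHom (t.mkQ ∘ₗ N.subtype)) ?_ ?_
    · rw [ModuleCat.hom_ofHom, LinearMap.ker_comp, Submodule.ker_mkQ]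
      exact P.mem_tors_of_iso ht (Submodule.comapSubtypeEquivOfLe htN).symm.toModuleIso
    · rw [ModuleCat.hom_ofHom, LinearMap.range_comp, Submodule.range_subtype,
        Submodule.map_comap_eq_of_surjective t.mkQ_surjective]
      exact P.mem_tors_of_surjective hX (ModuleCat.ofHom h.hom.rangeRestrict)
        h.hom.surjective_rangeRestrict
  have hrange : LinearMap.range h.hom ≤ ⊥ := by
    rw [← Submodule.map_comap_eq_of_surjective t.mkQ_surjective (LinearMap.range h.hom),
      ← t.mkQ_map_self]
    exact Submodule.map_mono (hmax N hN)
  exact ModuleCat.hom_ext (LinearMap.range_eq_bot.mp (le_bot_iff.mp hrange))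

lemma exists_isSES_tors_free (M : ModuleCat.{u} A) [Module.Finite A M] :
    ∃ (T F : ModuleCat.{u} A) (ι : T ⟶ M) (π : M ⟶ F),
      T ∈ P.tors ∧ F ∈ P.free ∧ IsSES ι π := by
  obtain ⟨t, ht, hmax⟩ := P.exists_greatest_tors_submodule M
  refine ⟨_, _, ModuleCat.ofHom t.subtype, ModuleCat.ofHom t.mkQ, ht,
    P.quotient_mem_free ht hmax, t.injective_subtype, t.mkQ_surjective, ?_⟩
  rw [LinearMap.exact_iff]
  exact t.ker_mkQ.trans t.range_subtype.symm

end TorsionSubmodule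

section ExtOrthogonal

variable {A : Type u} [Ring A]

def ExtOrthogonal (P : TorsionPair A) : Prop := ∀ F ∈ P.free, ∀ T ∈ P.tors, Ext1Vanish F T

variable {P : TorsionPair A}

lemma ExtOrthogonal.splitting [IsNoetherianRing A] (h : P.ExtOrthogonal) : P.Splitting := by
  intro M _ hM
  obtain ⟨T, F, ι, π, hT, hF, hses⟩ := P.exists_isSES_tors_free M
  obtain ⟨s, hs⟩ := h F hF T hT M ι π hses
  rcases hM.2 (π ≫ s) (by rw [Category.assoc, reassoc_of% hs]) with hzero | hid
  · have hπ : π = 0 := by rw [← Category.comp_id π, ← hs, ← Category.assoc, hzero, zero_comp]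
    refine .inl (P.mem_tors_of_surjective hT ι fun x => (hses.2.2 x).mp ?_)
    rw [hπ]
    rfl
  · have : Mono π := ⟨fun a b hab => by
      rw [← Category.comp_id a, ← Category.comp_id b, ← hid, reassoc_of% hab]⟩
    exact .inr (P.mem_free_of_mono hF π inferInstance)

variable [IsArtinianRing A]

lemma ExtOrthogonal.tau_mem_free (h : P.ExtOrthogonal) (τ : ARTranslation A) :
    ∀ N ∈ P.free, τ.τ N ∈ P.free := by
  intro N hN
  have := P.fg_free N hN
  revert hN
  refine ModuleCat.induction_on_indec (fun N => N ∈ P.free → τ.τ N ∈ P.free) ?_ ?_ ?_ ?_ N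
  · intro M N e hN hM
    exact P.mem_free_of_iso (hN (P.mem_free_of_iso hM e.symm)) (τ.τ_iso M N ⟨e⟩).some
  · intro M hM _
    have := ModuleCat.isZero_iff_subsingleton.mp hM
    exact P.mem_free_of_isZero (τ.τ_proj M inferInstance hM.projective)
  · intro M _ hM hfree
    by_cases hproj : Projective M
    · exact P.mem_free_of_isZero (τ.τ_proj M inferInstance hproj)
    obtain ⟨E, f, g, har⟩ := τ.τ_spec M inferInstance hM hproj
    refine (h.splitting _ (τ.fg_τ M inferInstance) har.indec_left).resolve_left fun htors => ?_
    exact har.not_split (h M hfree _ htors E f g har.ses)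
  · intro M N _ _ hM hN hfree
    rw [biprod_mem_free_iff] at hfree
    exact P.mem_free_of_iso (P.biprod_mem_free_iff.mpr ⟨hM hfree.1, hN hfree.2⟩)
      (τ.τ_add M N).some

lemma extOrthogonal_of_tau_mem_free (τ : ARTranslation A)
    (hτ : ∀ N ∈ P.free, τ.τ N ∈ P.free) : P.ExtOrthogonal := by
  intro F hF T hT
  have := P.fg_free F hF
  revert hF
  refine RelProjective.ext1Vanish ∘
    ModuleCat.induction_on_indec (fun F => F ∈ P.free → RelProjective F T) ?_ ?_ ?_ ?_ F
  · intro M N e hN hM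
    exact (hN (P.mem_free_of_iso hM e.symm)).of_iso e
  · exact fun M hM _ => .of_isZero hM
  · intro M hfin hM hfree
    by_cases hproj : Projective M
    · exact .of_projective
    obtain ⟨E, f, g, har⟩ := τ.τ_spec M hfin hM hproj
    exact (har.ext1Vanish (P.hom_zero T hT _ (hτ M hfree))).relProjective
  · intro M N _ _ hM hN hfree
    rw [biprod_mem_free_iff] at hfree
    exact (hM hfree.1).biprod (hN hfree.2)

open ZeroObject in
lemma Splitting.exists_iso_biprod (h : P.Splitting) (M : ModuleCat.{u} A) [Module.Finite A M] :
    ∃ X ∈ P.tors, ∃ Y ∈ P.free, Nonempty (M ≅ X ⊞ Y) := by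
  refine ModuleCat.induction_on_indec
    (fun M => ∃ X ∈ P.tors, ∃ Y ∈ P.free, Nonempty (M ≅ X ⊞ Y)) ?_ ?_ ?_ ?_ M
  · rintro M N e ⟨X, hX, Y, hY, ⟨φ⟩⟩
    exact ⟨X, hX, Y, hY, ⟨e ≪≫ φ⟩⟩
  · intro M hM
    exact ⟨M, P.mem_tors_of_isZero hM, M, P.mem_free_of_isZero hM, ⟨isoBiprodZero hM⟩⟩
  · intro M hfin hM
    rcases h M hfin hM with htors | hfree
    · exact ⟨M, htors, 0, P.mem_free_of_isZero (isZero_zero _), ⟨isoBiprodZero (isZero_zero _)⟩⟩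
    · exact ⟨0, P.mem_tors_of_isZero (isZero_zero _), M, hfree, ⟨isoZeroBiprod (isZero_zero _)⟩⟩
  · rintro M N - - ⟨X₁, hX₁, Y₁, hY₁, ⟨φ₁⟩⟩ ⟨X₂, hX₂, Y₂, hY₂, ⟨φ₂⟩⟩
    exact ⟨X₁ ⊞ X₂, P.biprod_mem_tors hX₁ hX₂, Y₁ ⊞ Y₂, P.biprod_mem_free_iff.mpr ⟨hY₁, hY₂⟩,
      ⟨biprod.mapIso φ₁ φ₂ ≪≫ biprod.interchange X₁ Y₁ X₂ Y₂⟩⟩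

lemma Splitting.extOrthogonal (h : P.Splitting) : P.ExtOrthogonal := by
  intro F hF T hT E f g hfg
  have := P.fg_free F hF
  have := P.fg_tors T hT
  have := hfg.finite_middle
  obtain ⟨X, hX, Y, hY, ⟨φ⟩⟩ := h.exists_iso_biprod E
  exact hfg.exists_section_of_iso_biprod φ (P.hom_zero T hT Y hY) (P.hom_zero X hX F hF)

end ExtOrthogonal

end TorsionPair

theorem stmt0_general (k : Type u) [Field k]
    (A : Type u) [Ring A] [Algebra k A] [FiniteDimensional k A]
    (τ : ARTranslation A) (P : TorsionPair A) :
    P.Splitting ↔ ∀ N ∈ P.free, τ.τ N ∈ P.free := by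
  have : IsArtinianRing A := .of_finite k A
  exact ⟨fun h => h.extOrthogonal.tau_mem_free τ,
    fun h => (TorsionPair.extOrthogonal_of_tau_mem_free τ h).splitting⟩

/-- A torsion pair in mod Λ is splitting iff the torsion-free class is closed under τ. -/
theorem stmt0 (k : Type u) [Field k] [IsAlgClosed k]
    (A : Type u) [Ring A] [Algebra k A] [FiniteDimensional k A]
    (τ : ARTranslation A) (P : TorsionPair A) :
    P.Splitting ↔ ∀ N ∈ P.free, τ.τ N ∈ P.free :=
  stmt0_general k A τ P
end

section
/- Let A be an Auslander algebra of global dimension 2, and let T_C be the tilting-cotilting module in C_A, with T_C ≅ Q̃ ⊕ (⊕_i Ω I_i) (syzygies of indecomposable injective non-projective modules I_i). If pd_A(τ_A(⊕_i Ω I_i)) ≤ 1, then every indecomposable module X in the torsion class Gen(T_C) satisfies id_A X ≤ 1. -/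
open CategoryTheory CategoryTheory.Limits

universe u

/-!
As `T` is cotilting, `id T ≤ 1`. If `X` is a quotient of `Tᵈ` with kernel `L`, then for every
module `M` the exact sequence `Ext²(M, Tᵈ) → Ext²(M, X) → Ext³(M, L) = 0` (as `gl.dim A ≤ 2`)
shows `Ext²(M, X) = 0`, i.e. `id X ≤ 1`.

Concretely, `X` embeds into the finitely generated injective module `Hom_k(A, X)` with
cokernel `C`, and Baer's criterion asks that `Ext¹(A/J, C) ≅ Ext¹(Ω(A/J), X)` vanish for every
left ideal `J`. As `pd Ω(A/J) ≤ 1`, this group is a quotient of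
`Ext¹(Ω(A/J), Tᵈ) ≅ Ext²(A/J, Tᵈ) = 0`.
-/

section ExtendsAlong

variable {C : Type*} [Category C]

/-- For `i` the kernel of an epimorphism `P ⟶ M` with `P` projective, this says `Ext¹(M, Y) = 0`. -/
def ExtendsAlong {K P : C} (i : K ⟶ P) (Y : C) : Prop :=
  ∀ φ : K ⟶ Y, ∃ ψ : P ⟶ Y, i ≫ ψ = φ

theorem ExtendsAlong.of_epi {K P N X : C} [Projective K] {j : K ⟶ P} (q : N ⟶ X) [Epi q]
    (h : ExtendsAlong j N) : ExtendsAlong j X := by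
  intro φ
  obtain ⟨ψ, hψ⟩ := h (Projective.factorThru φ q)
  exact ⟨ψ ≫ q, by simp [reassoc_of% hψ]⟩

variable [Abelian C]

theorem ExtendsAlong.of_shortExact {S S' : ShortComplex C} (hS : S.ShortExact)
    (hS' : S'.ShortExact) [Projective S.X₂] [Projective S'.X₂] (e : S.X₃ ≅ S'.X₃) {Y : C}
    (h : ExtendsAlong S.f Y) : ExtendsAlong S'.f Y := by
  have := hS.mono_f
  have := hS'.mono_f
  have := hS.epi_g
  have := hS'.epi_g
  intro φ
  -- `γ`, `δ` compare the two presentations, and `𝟙 - γ ≫ δ` factors through `S'.f` as `ρ`.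
  let γ : S'.X₂ ⟶ S.X₂ := Projective.factorThru (S'.g ≫ e.inv) S.g
  let δ : S.X₂ ⟶ S'.X₂ := Projective.factorThru (S.g ≫ e.hom) S'.g
  have hγ : γ ≫ S.g = S'.g ≫ e.inv := Projective.factorThru_comp _ _
  have hδ : δ ≫ S'.g = S.g ≫ e.hom := Projective.factorThru_comp _ _
  let δ₀ : S.X₁ ⟶ S'.X₁ := hS'.exact.lift (S.f ≫ δ) (by simp [hδ])
  let κ : S'.X₁ ⟶ S.X₁ := hS.exact.lift (S'.f ≫ γ) (by simp [hγ])
  let ρ : S'.X₂ ⟶ S'.X₁ := hS'.exact.lift (𝟙 _ - γ ≫ δ) (by simp [hδ, reassoc_of% hγ])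
  obtain ⟨ψ₀, hψ₀⟩ := h (δ₀ ≫ φ)
  have hκ : S'.f ≫ γ = κ ≫ S.f := (hS.exact.lift_f _ _).symm
  have hρ : S'.f ≫ ρ = 𝟙 _ - κ ≫ δ₀ := by
    rw [← cancel_mono S'.f]
    simp [ρ, δ₀, reassoc_of% hκ]
  refine ⟨γ ≫ ψ₀ + ρ ≫ φ, ?_⟩
  simp [reassoc_of% hκ, hψ₀, reassoc_of% hρ]

theorem ExtendsAlong.of_injective_copresentation {S T : ShortComplex C} (hS : S.ShortExact)
    {P : C} [Projective P] (i : S.X₃ ⟶ P) [Mono i] (hT : T.ShortExact) [Injective T.X₂]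
    [Injective T.X₃] : ExtendsAlong S.f T.X₁ := by
  have := hS.mono_f
  have := hS.epi_g
  have := hT.mono_f
  have := hT.epi_g
  intro φ
  let c : S.X₂ ⟶ T.X₂ := Injective.factorThru (φ ≫ T.f) S.f
  have hc : S.f ≫ c = φ ≫ T.f := Injective.comp_factorThru _ _
  let d : S.X₃ ⟶ T.X₃ := hS.exact.desc (c ≫ T.g) (by simp [reassoc_of% hc])
  let E : P ⟶ T.X₂ := Projective.factorThru (Injective.factorThru d i) T.g
  have hE : i ≫ E ≫ T.g = d := by simp [E]
  refine ⟨hT.exact.lift (c - S.g ≫ i ≫ E) ?_, ?_⟩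
  · simp [hE, d]
  · rw [← cancel_mono T.f]
    simp [hc]

theorem ExtendsAlong.X₃_of_X₁ {S T : ShortComplex C} (hS : S.Exact) [Epi S.g]
    [Projective S.X₂] (hT : T.ShortExact) [Injective T.X₂] {P : C} (i : S.X₃ ⟶ P) [Mono i]
    (h : ExtendsAlong S.f T.X₁) : ExtendsAlong i T.X₃ := by
  have := hT.mono_f
  have := hT.epi_g
  intro φ
  let a : S.X₂ ⟶ T.X₂ := Projective.factorThru (S.g ≫ φ) T.g
  have ha : a ≫ T.g = S.g ≫ φ := Projective.factorThru_comp _ _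
  obtain ⟨β, hβ⟩ := h (hT.exact.lift (S.f ≫ a) (by simp [ha]))
  let ψ : S.X₃ ⟶ T.X₂ := hS.desc (a - β ≫ T.f) (by simp [reassoc_of% hβ])
  refine ⟨Injective.factorThru ψ i ≫ T.g, ?_⟩
  rw [← cancel_epi S.g]
  simp [ψ, ha]

end ExtendsAlong

section ModuleDimensions

variable {A : Type u} [Ring A]

theorem IsSES.comp_eq_zero_s9 {K P M : ModuleCat.{u} A} {f : K ⟶ P} {g : P ⟶ M} (h : IsSES f g) :
    f ≫ g = 0 :=
  ModuleCat.hom_ext h.2.2.linearMap_comp_eq_zero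

theorem IsSES.shortExact {K P M : ModuleCat.{u} A} {f : K ⟶ P} {g : P ⟶ M} (h : IsSES f g) :
    (ShortComplex.mk f g h.comp_eq_zero_s9).ShortExact :=
  ModuleCat.shortComplex_shortExact _ h.2.2 h.1 h.2.1

theorem ProjDimLE.of_projective {M : ModuleCat.{u} A} (hM : Projective M) :
    ∀ n, ProjDimLE n M
  | 0 => hM
  | _ + 1 => Or.inl hM

theorem ProjDimLE.exists_isSES {n : ℕ} {M : ModuleCat.{u} A} (h : ProjDimLE (n + 1) M) :
    ∃ (K P : ModuleCat.{u} A) (f : K ⟶ P) (g : P ⟶ M),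
      Projective P ∧ IsSES f g ∧ ProjDimLE n K := by
  rcases h with hM | ⟨K, P, f, g, hP, -, hfg, hK⟩
  · refine ⟨ModuleCat.of A PUnit, M, 0, 𝟙 M, hM, ⟨fun _ _ _ => rfl, Function.surjective_id, ?_⟩,
      .of_projective ((IsProjective.iff_projective _).mp inferInstance) n⟩
    intro y
    simp [eq_comm]
  · exact ⟨K, P, f, g, hP, hfg, hK⟩

theorem ExtendsAlong.copies {K P T : ModuleCat.{u} A} {j : K ⟶ P} (h : ExtendsAlong j T) (d : ℕ) :
    ExtendsAlong j (copies A T d) := by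
  intro φ
  choose ψ hψ using fun i => h (φ ≫ ModuleCat.ofHom (LinearMap.proj i))
  refine ⟨ModuleCat.ofHom (LinearMap.pi fun i => (ψ i).hom), ?_⟩
  ext x
  funext i
  exact ConcreteCategory.congr_hom (hψ i) x

theorem extendsAlong_of_injDimLE_one {T : ModuleCat.{u} A} (hT : InjDimLE 1 T)
    {S : ShortComplex (ModuleCat.{u} A)} (hS : S.ShortExact) {P : ModuleCat.{u} A} [Projective P]
    (i : S.X₃ ⟶ P) [Mono i] : ExtendsAlong S.f T := by
  have := hS.mono_f
  rcases hT with hT | ⟨I₀, I₁, f, g, hI₀, -, hfg, hI₁⟩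
  · exact fun φ => ⟨Injective.factorThru φ S.f, Injective.comp_factorThru _ _⟩
  · have : Injective I₁ := hI₁
    exact .of_injective_copresentation hS i hfg.shortExact

theorem injective_cokernel_of_globalDimLE_two (hgl : GlobalDimLE A 2) {T X I : ModuleCat.{u} A}
    (hT : InjDimLE 1 T) (hX : IsGenBy T X) [Injective I] (Φ : X ⟶ I) (hΦ : Function.Injective Φ) :
    Injective (ModuleCat.of A (I ⧸ LinearMap.range Φ.hom)) := by
  obtain ⟨d, q, hq⟩ := hX
  have : Epi q := (ModuleCat.epi_iff_surjective q).mpr hq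
  have hU : (ShortComplex.mk Φ (ModuleCat.ofHom (LinearMap.range Φ.hom).mkQ)
      (ModuleCat.hom_ext (LinearMap.exact_map_mkQ_range _).linearMap_comp_eq_zero)).ShortExact :=
    ModuleCat.shortComplex_shortExact _ (LinearMap.exact_map_mkQ_range _) hΦ
      (Submodule.mkQ_surjective _)
  refine Module.injective_object_of_injective_module _ _
    (inj := Module.Baer.injective fun J φ => ?_)
  obtain ⟨K, P, f, g, hP, hfg, hK⟩ := (hgl (ModuleCat.of A (A ⧸ J)) inferInstance).exists_isSES
  obtain ⟨K', P', f', g', hP', hfg', hK'⟩ := hK.exists_isSES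
  have : Projective K' := hK'
  have := hP
  have := hP'
  have := hfg.shortExact.mono_f
  have := hfg'.shortExact.epi_g
  have hK'X : ExtendsAlong f' X :=
    ((extendsAlong_of_injDimLE_one hT hfg'.shortExact f).copies d).of_epi q
  have hKC := hK'X.X₃_of_X₁ hfg'.shortExact.exact hU f
  have hJ : (ShortComplex.mk (ModuleCat.ofHom J.subtype) (ModuleCat.ofHom J.mkQ)
      (ModuleCat.hom_ext (LinearMap.exact_subtype_mkQ J).linearMap_comp_eq_zero)).ShortExact :=
    ModuleCat.shortComplex_shortExact _ (LinearMap.exact_subtype_mkQ J) J.injective_subtype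
      (Submodule.mkQ_surjective _)
  obtain ⟨ψ, hψ⟩ := hKC.of_shortExact hfg.shortExact hJ (Iso.refl _) (ModuleCat.ofHom φ)
  exact ⟨ψ.hom, fun x hx => ConcreteCategory.congr_hom hψ ⟨x, hx⟩⟩

theorem injDimLE_one_of_isGenBy (hgl : GlobalDimLE A 2) {T X I : ModuleCat.{u} A}
    (hT : InjDimLE 1 T) (hX : IsGenBy T X) [Injective I] [Module.Finite A I] (Φ : X ⟶ I)
    (hΦ : Function.Injective Φ) : InjDimLE 1 X :=
  Or.inr ⟨I, ModuleCat.of A (I ⧸ LinearMap.range Φ.hom), Φ,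
    ModuleCat.ofHom (LinearMap.range Φ.hom).mkQ, inferInstance, inferInstance,
    ⟨hΦ, Submodule.mkQ_surjective _, LinearMap.exact_map_mkQ_range _⟩,
    injective_cokernel_of_globalDimLE_two hgl hT hX Φ hΦ⟩

end ModuleDimensions

theorem Module.Injective.of_divisionRing (K V : Type*) [DivisionRing K] [AddCommGroup V]
    [Module K V] : Module.Injective K V where
  out _ _ _ _ _ _ f hf g := by
    obtain ⟨r, hr⟩ := f.exists_leftInverse_of_injective (LinearMap.ker_eq_bot.mpr hf)
    exact ⟨g ∘ₗ r, fun x => by simp [← LinearMap.comp_apply (f := r), hr]⟩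

noncomputable section CoinducedModule

open ModuleCat

variable (k : Type u) {A : Type u} [Field k] [Ring A] [Algebra k A]

/-- `Hom_k(A, X)`, with `(a • g) b = g (b * a)`. -/
abbrev coinduced (X : ModuleCat.{u} A) : ModuleCat.{u} A :=
  (coextendScalars (algebraMap k A)).obj ((restrictScalars (algebraMap k A)).obj X)

instance (X : ModuleCat.{u} A) : Injective (coinduced k X) :=
  have := Module.injective_object_of_injective_module k _
    (inj := Module.Injective.of_divisionRing k ((restrictScalars (algebraMap k A)).obj X))
  Injective.injective_of_adjoint (restrictCoextendScalarsAdj (algebraMap k A)) _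

variable [FiniteDimensional k A]

theorem finite_restrictScalars (X : ModuleCat.{u} A) [Module.Finite A X] :
    Module.Finite k ((restrictScalars (algebraMap k A)).obj X) := by
  let M := (restrictScalars (algebraMap k A)).obj X
  let _ : Module A M := inferInstanceAs (Module A X)
  have : Module.Finite A M := inferInstanceAs (Module.Finite A X)
  have : IsScalarTower k A M := ⟨fun c a x => by
    show (c • a) • x = algebraMap k A c • a • x
    rw [Algebra.smul_def, mul_smul]⟩
  exact Module.Finite.trans A M

theorem finite_coinduced (X : ModuleCat.{u} A) [Module.Finite A X] :
    Module.Finite A (coinduced k X) := by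
  let V := (restrictScalars (algebraMap k A)).obj (ModuleCat.of A A)
  let W := (restrictScalars (algebraMap k A)).obj X
  have := finite_restrictScalars k (ModuleCat.of A A)
  have := finite_restrictScalars k X
  let _ : Module k (coinduced k X) := inferInstanceAs (Module k (V →ₗ[k] W))
  have : Module.Finite k (coinduced k X) := inferInstanceAs (Module.Finite k (V →ₗ[k] W))
  have : IsScalarTower k A (coinduced k X) := ⟨fun c a g => by
    refine CoextendScalars.ext (LinearMap.ext fun (b : A) => ?_)
    let g' : V →ₗ[k] W := g
    change g' (b * (c • a)) = c • g' (b * a)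
    have key : b * (c • a) = algebraMap k A c * (b * a) := by
      rw [Algebra.smul_def, ← mul_assoc, ← mul_assoc, Algebra.commutes]
    exact (congrArg g' key).trans (g'.map_smul c (b * a))⟩
  exact Module.Finite.of_restrictScalars_finite k A _

end CoinducedModule

theorem exists_finite_injective_embedding (k : Type u) {A : Type u} [Field k] [Ring A] [Algebra k A]
    [FiniteDimensional k A] (X : ModuleCat.{u} A) [Module.Finite A X] :
    ∃ (I : ModuleCat.{u} A) (Φ : X ⟶ I), Injective I ∧ Module.Finite A I ∧ Function.Injective Φ :=
  ⟨coinduced k X, (ModuleCat.restrictCoextendScalarsAdj (algebraMap k A)).unit.app X, inferInstance,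
    finite_coinduced k X, fun x y h =>
      (one_smul A x).symm.trans ((congrArg (fun g : coinduced k X => g (1 : A)) h).trans
        (one_smul A y))⟩

theorem stmt9_general (k : Type u) [Field k]
    (A : Type u) [Ring A] [Algebra k A] [FiniteDimensional k A]
    (hgl : GlobalDimEq2 A)
    (T : ModuleCat.{u} A) (hC : IsCotilting T) :
    ∀ X : ModuleCat.{u} A, Module.Finite A X → Indec X → IsGenBy T X → InjDimLE 1 X := by
  intro X _ _ hX
  obtain ⟨I, Φ, _, _, hΦ⟩ := exists_finite_injective_embedding k X
  exact injDimLE_one_of_isGenBy hgl.1 hC.id hX Φ hΦ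

/-- If pd(τ(⊕ Ω I_i)) ≤ 1 (I_i the injective non-projectives),
then every indecomposable X ∈ Gen(T_C) has id ≤ 1. -/
theorem stmt9 (k : Type u) [Field k] [IsAlgClosed k]
    (A : Type u) [Ring A] [Algebra k A] [FiniteDimensional k A]
    (τ : ARTranslation A) (hgl : GlobalDimEq2 A) (hdom : DomDimGE2 A)
    (T : ModuleCat.{u} A) (hT : IsTilting T) (hC : IsCotilting T) (hTC : InC T)
    (hpd : ∀ I K : ModuleCat.{u} A, Module.Finite A I → Injective I → ¬ Projective I →
      IsMinSyzygy K I → ProjDimLE 1 (τ.τ K)) :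
    ∀ X : ModuleCat.{u} A, Module.Finite A X → Indec X → IsGenBy T X → InjDimLE 1 X :=
  stmt9_general k A hgl T hC
end
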